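/- Let D be the unique ℚ-linear derivation on the polynomial ring ℚ[x,y,z] with D(x) = xyz, D(y) = yz², D(z) = y²z. Then for every integer n ≥ 1, Dⁿ(x) = x · ∑_{k=1}^{2n−1} T(n,k) y^k z^{2n−k}. -/

import Mathlib

/-!
Write `Dⁿ(x) = x · Tₙ(y, z)` with `Tₙ = ∑_{i+j=2n} T(n,i) yⁱ zʲ`. Since `D(x) = x · yz`, the
Leibniz rule gives `Tₙ₊₁ = yz · Tₙ + D(Tₙ)`, and `D(yⁱ zʲ) = i yⁱ zʲ⁺² + j yⁱ⁺² zʲ`. Collecting the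
coefficient of `yᵏ z²ⁿ⁺²⁻ᵏ` on the right gives `k T(n,k) + T(n,k-1) + (2n-k+2) T(n,k-2)`, which is
the recurrence defining `T(n+1,k)`; the recurrence also holds from `n = 0`, where `T₀ = 1`.
-/

/-- The numbers T(n,k) defined by T(1,1) = 1, T(1,k) = 0 for k ≠ 1, and the
recurrence T(n+1,k) = k·T(n,k) + T(n,k-1) + (2n-k+2)·T(n,k-2) for n ≥ 1.
(The value at n = 0 encodes T_0(x) = 1.) -/
def Tc : ℕ → ℤ → ℤ
  | 0, k => if k = 0 then 1 else 0
  | 1, k => if k = 1 then 1 else 0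
  | (n+2), k => k * Tc (n+1) k + Tc (n+1) (k-1) + (2*((n : ℤ)+1) - k + 2) * Tc (n+1) (k-2)

open MvPolynomial Finset

theorem Tc_succ (n : ℕ) (k : ℤ) :
    Tc (n + 1) k = k * Tc n k + Tc n (k - 1) + (2 * n - k + 2) * Tc n (k - 2) := by
  rcases n with _ | n
  · simp only [Tc]
    split_ifs <;> omega
  · simp only [Tc]
    push_cast
    ring

theorem Tc_eq_zero_of_neg {n : ℕ} {k : ℤ} (hk : k < 0) : Tc n k = 0 := by
  induction n generalizing k with
  | zero => rw [Tc, if_neg hk.ne]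
  | succ n ih => rw [Tc_succ, ih hk, ih (by omega), ih (by omega)]; ring

theorem Tc_eq_zero_of_two_mul_lt {n : ℕ} {k : ℤ} (hk : 2 * n < k) : Tc n k = 0 := by
  induction n generalizing k with
  | zero => rw [Tc, if_neg (by omega)]
  | succ n ih =>
    push_cast at hk
    rw [Tc_succ, ih (by omega), ih (by omega), ih (by omega)]; ring

theorem Tc_zero_right {n : ℕ} (hn : n ≠ 0) : Tc n 0 = 0 := by
  obtain ⟨n, rfl⟩ := Nat.exists_eq_succ_of_ne_zero hn
  rw [Tc_succ, Tc_eq_zero_of_neg (k := 0 - 1) (by norm_num),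
    Tc_eq_zero_of_neg (k := 0 - 2) (by norm_num)]
  ring

theorem Tc_two_mul {n : ℕ} (hn : n ≠ 0) : Tc n (2 * n) = 0 := by
  obtain ⟨n, rfl⟩ := Nat.exists_eq_succ_of_ne_zero hn
  rw [Tc_succ, Tc_eq_zero_of_two_mul_lt (by push_cast; omega),
    Tc_eq_zero_of_two_mul_lt (by push_cast; omega)]
  push_cast
  ring

theorem Derivation.map_pow_of_map_eq_mul {R A : Type*} [CommSemiring R] [CommSemiring A]
    [Algebra R A] (D : Derivation R A A) {a b : A} (h : D a = a * b) (n : ℕ) :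
    D (a ^ n) = n * a ^ n * b := by
  induction n with
  | zero => simp
  | succ n ih =>
    rw [pow_succ, D.leibniz, ih, h, smul_eq_mul, smul_eq_mul]
    push_cast
    ring

/-- Indexing by the antidiagonal of `2n` keeps truncated subtraction out of the exponents. -/
noncomputable def tPoly (n : ℕ) : MvPolynomial (Fin 3) ℚ :=
  ∑ p ∈ antidiagonal (2 * n), C (Tc n p.1 : ℚ) * X 1 ^ p.1 * X 2 ^ p.2

theorem tPoly_zero : tPoly 0 = 1 := by
  simp [tPoly, Tc]

theorem tPoly_succ (n : ℕ) :
    tPoly (n + 1) = ∑ p ∈ antidiagonal (2 * n),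
      (X 1 * X 2 * (C (Tc n p.1 : ℚ) * X 1 ^ p.1 * X 2 ^ p.2)
        + C (p.1 * Tc n p.1 : ℚ) * X 1 ^ p.1 * X 2 ^ (p.2 + 2)
        + C (p.2 * Tc n p.1 : ℚ) * X 1 ^ (p.1 + 2) * X 2 ^ p.2) := by
  have hneg (k : ℤ) (hk : k < 0) : (Tc n k : ℚ) = 0 := by
    rw [Tc_eq_zero_of_neg hk, Int.cast_zero]
  have hbig (k : ℤ) (hk : 2 * n < k) : (Tc n k : ℚ) = 0 := by
    rw [Tc_eq_zero_of_two_mul_lt hk, Int.cast_zero]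
  have hrec : tPoly (n + 1) = ∑ p ∈ antidiagonal (2 * n + 1 + 1),
      (C (Tc n (p.1 - 1) : ℚ) * X 1 ^ p.1 * X 2 ^ p.2
        + C (p.1 * Tc n p.1 : ℚ) * X 1 ^ p.1 * X 2 ^ p.2
        + C (p.2 * Tc n (p.1 - 2) : ℚ) * X 1 ^ p.1 * X 2 ^ p.2) := by
    refine sum_congr (by ring_nf) fun p hp => ?_
    rw [HasAntidiagonal.mem_antidiagonal] at hp
    rw [Tc_succ, show (2 * (n : ℤ) - p.1 + 2) = p.2 by omega]
    push_cast
    simp only [map_add, map_mul]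
    ring
  have hshift_both : (∑ p ∈ antidiagonal (2 * n + 1 + 1),
        C (Tc n (p.1 - 1) : ℚ) * X 1 ^ p.1 * X 2 ^ p.2 : MvPolynomial (Fin 3) ℚ)
      = ∑ p ∈ antidiagonal (2 * n), X 1 * X 2 * (C (Tc n p.1 : ℚ) * X 1 ^ p.1 * X 2 ^ p.2) := by
    rw [Nat.sum_antidiagonal_succ, Nat.sum_antidiagonal_succ', hneg _ (by omega),
      hbig _ (by omega)]
    simp only [map_zero, zero_mul, zero_add]
    refine sum_congr rfl fun p _ => ?_
    push_cast
    rw [add_sub_cancel_right]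
    ring
  have hshift_snd : (∑ p ∈ antidiagonal (2 * n + 1 + 1),
        C (p.1 * Tc n p.1 : ℚ) * X 1 ^ p.1 * X 2 ^ p.2 : MvPolynomial (Fin 3) ℚ)
      = ∑ p ∈ antidiagonal (2 * n), C (p.1 * Tc n p.1 : ℚ) * X 1 ^ p.1 * X 2 ^ (p.2 + 2) := by
    rw [Nat.sum_antidiagonal_succ', Nat.sum_antidiagonal_succ', hbig _ (by omega),
      hbig _ (by omega)]
    simp [add_assoc]
  have hshift_fst : (∑ p ∈ antidiagonal (2 * n + 1 + 1),
        C (p.2 * Tc n (p.1 - 2) : ℚ) * X 1 ^ p.1 * X 2 ^ p.2 : MvPolynomial (Fin 3) ℚ)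
      = ∑ p ∈ antidiagonal (2 * n), C (p.2 * Tc n p.1 : ℚ) * X 1 ^ (p.1 + 2) * X 2 ^ p.2 := by
    rw [Nat.sum_antidiagonal_succ, Nat.sum_antidiagonal_succ, hneg _ (by omega),
      hneg _ (by omega)]
    simp only [mul_zero, map_zero, zero_mul, zero_add]
    refine sum_congr rfl fun p _ => ?_
    push_cast
    ring_nf
  rw [hrec, sum_add_distrib, sum_add_distrib, hshift_both, hshift_snd, hshift_fst,
    sum_add_distrib, sum_add_distrib]

section

variable {D : Derivation ℚ (MvPolynomial (Fin 3) ℚ) (MvPolynomial (Fin 3) ℚ)}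

theorem map_C_mul_X_pow_mul_X_pow (hy : D (X 1) = X 1 * X 2 ^ 2) (hz : D (X 2) = X 1 ^ 2 * X 2)
    (c : ℚ) (i j : ℕ) :
    D (C c * X 1 ^ i * X 2 ^ j)
      = C (i * c) * X 1 ^ i * X 2 ^ (j + 2) + C (j * c) * X 1 ^ (i + 2) * X 2 ^ j := by
  have hz' : D (X 2) = X 2 * X 1 ^ 2 := by rw [hz, mul_comm]
  simp only [Derivation.leibniz, derivation_C, D.map_pow_of_map_eq_mul hy,
    D.map_pow_of_map_eq_mul hz', smul_eq_mul, map_mul, map_natCast]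
  ring

theorem X_mul_X_mul_tPoly_add_map_tPoly (hy : D (X 1) = X 1 * X 2 ^ 2)
    (hz : D (X 2) = X 1 ^ 2 * X 2) (n : ℕ) :
    X 1 * X 2 * tPoly n + D (tPoly n) = tPoly (n + 1) := by
  rw [tPoly_succ, tPoly, map_sum, mul_sum]
  simp only [map_C_mul_X_pow_mul_X_pow hy hz, sum_add_distrib]
  abel

theorem iterate_map_X_zero (hx : D (X 0) = X 0 * X 1 * X 2) (hy : D (X 1) = X 1 * X 2 ^ 2)
    (hz : D (X 2) = X 1 ^ 2 * X 2) (n : ℕ) :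
    (⇑D)^[n] (X 0) = X 0 * tPoly n := by
  induction n with
  | zero => rw [Function.iterate_zero_apply, tPoly_zero, mul_one]
  | succ n ih =>
    rw [Function.iterate_succ_apply', ih, D.leibniz, hx, smul_eq_mul, smul_eq_mul,
      ← X_mul_X_mul_tPoly_add_map_tPoly hy hz]
    ring

end

theorem tPoly_eq_sum_Icc {n : ℕ} (hn : n ≠ 0) :
    tPoly n = ∑ k ∈ Icc 1 (2 * n - 1), C (Tc n k : ℚ) * X 1 ^ k * X 2 ^ (2 * n - k) := by
  rw [tPoly, Nat.sum_antidiagonal_eq_sum_range_succ_mk]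
  refine (sum_subset (fun k hk => ?_) fun k hk hk' => ?_).symm
  · simp only [mem_Icc, mem_range] at hk ⊢
    omega
  · simp only [mem_Icc, mem_range] at hk hk'
    obtain rfl | rfl : k = 0 ∨ k = 2 * n := by omega
    · simp [Tc_zero_right hn]
    · simp [Tc_two_mul hn]

open MvPolynomial in
/-- If D is the (unique) ℚ-linear derivation on ℚ[x,y,z] with D(x) = xyz,
D(y) = yz², D(z) = y²z, then for n ≥ 1,
Dⁿ(x) = x · ∑_(k=1)^(2n-1) T(n,k) y^k z^(2n-k). -/
theorem stmt8 (D : Derivation ℚ (MvPolynomial (Fin 3) ℚ) (MvPolynomial (Fin 3) ℚ))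
    (hx : D (X 0) = X 0 * X 1 * X 2)
    (hy : D (X 1) = X 1 * X 2 ^ 2)
    (hz : D (X 2) = X 1 ^ 2 * X 2)
    (n : ℕ) (hn : 1 ≤ n) :
    (⇑D)^[n] (X 0)
      = X 0 * ∑ k ∈ Finset.Icc 1 (2*n - 1),
          C ((Tc n k : ℚ)) * X 1 ^ k * X 2 ^ (2*n - k) := by
  rw [iterate_map_X_zero hx hy hz, tPoly_eq_sum_Icc (by omega)]
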